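/- arXiv:1107.0537 — 4 statements merged into one kernel-verified Lean document; each statement's English description precedes it below -/
import Mathlib

section
/- Let 1 ≤ ℓ ≤ ℓ', let R, J be the ring and ideal built from ℓ sets of n variables and R', J' those built from ℓ' sets of n variables. For every d ∈ ℕ^ℓ, the dimension over ℚ of the multidegree-d component of R/J equals the dimension over ℚ of the multidegree-(d_1,…,d_ℓ,0,…,0) component of R'/J'. In other words, the multigraded Hilbert function of the diagonal co-quasi-invariant space of G(r,n) is stable under increasing the number ℓ of sets of variables. -/
open scoped Classical

noncomputable section

/-- The polynomial ring `ℚ[x_{ij} : 1 ≤ i ≤ ℓ, 1 ≤ j ≤ n]`. -/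
abbrev PolyR (ℓ n : ℕ) : Type := MvPolynomial (Fin ℓ × Fin n) ℚ

/-- The monomial quasi-invariant `M_A` attached to a matrix `A` given as a list of columns
(each column a function `Fin ℓ → ℕ`): the sum over all strictly increasing choices of
columns of variables of the corresponding product of powers. -/
noncomputable def Mlist (n : ℕ) {ℓ : ℕ} (A : List (Fin ℓ → ℕ)) : PolyR ℓ n :=
  ∑ s ∈ Finset.univ.filter (fun s : Fin A.length → Fin n => StrictMono s),
    ∏ c : Fin A.length, ∏ i : Fin ℓ, MvPolynomial.X (i, s c) ^ (A.get c i)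

/-- `A` (a list of columns) is an `r`-composition-matrix: it is nonempty and each column sum
is a positive multiple of `r`. -/
def IsRCompList (r : ℕ) {ℓ : ℕ} (A : List (Fin ℓ → ℕ)) : Prop :=
  A ≠ [] ∧ ∀ V ∈ A, (∑ i, V i) ≠ 0 ∧ r ∣ (∑ i, V i)

/-- The ideal `J` generated by the monomial quasi-invariants `M_A`, for `A` an
`r`-composition-matrix with `ℓ` rows and at most `n` columns. -/
noncomputable def Jdeal (r n ℓ : ℕ) : Ideal (PolyR ℓ n) :=
  Ideal.span {f | ∃ A : List (Fin ℓ → ℕ), IsRCompList r A ∧ A.length ≤ n ∧ f = Mlist n A}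

/-- The submodule of polynomials that are multihomogeneous of multidegree `d ∈ ℕ^ℓ`
(total degree `d i` in the `i`-th row of variables). -/
noncomputable def homogComp (ℓ n : ℕ) (d : Fin ℓ → ℕ) : Submodule ℚ (PolyR ℓ n) :=
  MvPolynomial.weightedHomogeneousSubmodule ℚ (fun p : Fin ℓ × Fin n => Pi.single p.1 1) d

/-- The dimension over `ℚ` of the multidegree-`d` component of `R/J`, i.e. of the image of
the multihomogeneous component of degree `d` in the quotient by the ideal `J`. -/
noncomputable def compDim (r n ℓ : ℕ) (d : Fin ℓ → ℕ) : ℕ :=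
  Module.finrank ℚ
    ↥((homogComp ℓ n d).map (Ideal.Quotient.mkₐ ℚ (Jdeal r n ℓ)).toLinearMap)


/-! Adding rows of variables is the renaming `Φ : R → R'` along the first `ℓ` rows, and killing
the new variables is a retraction `Ψ` with `Ψ ∘ Φ = id`. `Φ` sends `M_A` to `M_{A'}`, where `A'` is
`A` padded with zero rows, while `Ψ` sends a generator `M_{A'}` of `J'` to `0` if `A'` has a nonzero
entry in a new row, and to the generator `M_A` of `J` otherwise. Hence `Φ⁻¹(J') = J`, so `Φ`
induces an injection `R/J → R'/J'`. Finally, a polynomial of multidegree `(d,0,…,0)` only involves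
the first `ℓ` rows of variables, so `Φ` maps `R_d` onto `R'_(d,0,…,0)`. -/

open MvPolynomial Function

theorem Finsupp.weight_mapDomain {σ τ M : Type*} [AddCommMonoid M] (w : τ → M) (e : σ → τ)
    (u : σ →₀ ℕ) : Finsupp.weight w (u.mapDomain e) = Finsupp.weight (w ∘ e) u := by
  simp only [Finsupp.weight_apply]
  exact Finsupp.sum_mapDomain_index (fun _ => zero_smul ℕ _) fun _ _ _ => add_smul _ _ _

theorem Finsupp.weight_comp_addMonoidHom {σ M N : Type*} [AddCommMonoid M] [AddCommMonoid N]
    (g : M →+ N) (w : σ → M) (u : σ →₀ ℕ) :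
    Finsupp.weight (g ∘ w) u = g (Finsupp.weight w u) := by
  simp only [Finsupp.weight_apply, map_finsuppSum, map_nsmul, comp_apply]

namespace MvPolynomial

variable {σ τ R M N : Type*} [CommSemiring R] [AddCommMonoid M] [AddCommMonoid N]

theorem isWeightedHomogeneous_rename_iff {e : σ → τ} (he : Injective e) {w : τ → M}
    {φ : MvPolynomial σ R} {m : M} :
    (rename e φ).IsWeightedHomogeneous w m ↔ φ.IsWeightedHomogeneous (w ∘ e) m := by
  refine ⟨fun h u hu => ?_, fun h u hu => ?_⟩
  · rw [← Finsupp.weight_mapDomain]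
    exact h (by rwa [coeff_rename_mapDomain e he])
  · obtain ⟨v, rfl, hv⟩ := coeff_rename_ne_zero e φ u hu
    rw [Finsupp.weight_mapDomain, h hv]

theorem isWeightedHomogeneous_comp_iff {g : M →+ N} (hg : Injective g) {w : σ → M}
    {φ : MvPolynomial σ R} {m : M} :
    φ.IsWeightedHomogeneous (g ∘ w) (g m) ↔ φ.IsWeightedHomogeneous w m := by
  simp only [IsWeightedHomogeneous, Finsupp.weight_comp_addMonoidHom, hg.eq_iff]

theorem killCompl_X_of_notMem_range {f : σ → τ} (hf : Injective f) {i : τ}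
    (hi : i ∉ Set.range f) : killCompl (R := R) hf (X i) = 0 := by
  rw [killCompl, aeval_X, dif_neg hi]

end MvPolynomial

theorem finrank_map_mkₐ_map_of_comap_eq {K A B : Type*} [Field K] [CommRing A] [CommRing B]
    [Algebra K A] [Algebra K B] (φ : A →ₐ[K] B) {I : Ideal A} {I' : Ideal B}
    (hI : I'.comap φ = I) (H : Submodule K A) :
    Module.finrank K ((H.map φ.toLinearMap).map (Ideal.Quotient.mkₐ K I').toLinearMap) =
      Module.finrank K (H.map (Ideal.Quotient.mkₐ K I).toLinearMap) := by
  let U := Ideal.quotientMapₐ I' φ hI.ge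
  have hU : Injective U := Ideal.quotientMap_injective' (H := hI.ge) hI.le
  have hcomm : (Ideal.Quotient.mkₐ K I').toLinearMap ∘ₗ φ.toLinearMap =
      U.toLinearMap ∘ₗ (Ideal.Quotient.mkₐ K I).toLinearMap := rfl
  rw [← Submodule.map_comp, hcomm, Submodule.map_comp]
  exact (Submodule.equivMapOfInjective _ hU _).finrank_eq.symm

def padZero {ℓ : ℕ} (ℓ' : ℕ) : (Fin ℓ → ℕ) →+ (Fin ℓ' → ℕ) where
  toFun v i := if hi : (i : ℕ) < ℓ then v ⟨i, hi⟩ else 0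
  map_zero' := by ext i; simp
  map_add' v w := by ext i; simp only [Pi.add_apply]; split_ifs <;> simp

section Rows

variable {ℓ ℓ' : ℕ}

theorem padZero_apply_castLE (h : ℓ ≤ ℓ') (v : Fin ℓ → ℕ) (i : Fin ℓ) :
    padZero ℓ' v (Fin.castLE h i) = v i := by
  simp [padZero]

theorem padZero_apply_of_notMem_range (h : ℓ ≤ ℓ') (v : Fin ℓ → ℕ) {i : Fin ℓ'}
    (hi : i ∉ Set.range (Fin.castLE h)) : padZero ℓ' v i = 0 :=
  dif_neg fun hlt => hi ⟨⟨i, hlt⟩, rfl⟩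

theorem padZero_injective (h : ℓ ≤ ℓ') :
    Injective (padZero ℓ' : (Fin ℓ → ℕ) →+ (Fin ℓ' → ℕ)) := fun v w hvw =>
  funext fun i => by rw [← padZero_apply_castLE h v, hvw, padZero_apply_castLE]

theorem padZero_single (h : ℓ ≤ ℓ') (a : Fin ℓ) (k : ℕ) :
    padZero ℓ' (Pi.single a k) = Pi.single (Fin.castLE h a) k := by
  ext i
  by_cases hi : i ∈ Set.range (Fin.castLE h)
  · obtain ⟨i, rfl⟩ := hi
    simp [padZero_apply_castLE, Pi.single_apply, (Fin.castLE_injective h).eq_iff]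
  · rw [padZero_apply_of_notMem_range h _ hi, Pi.single_eq_of_ne]
    rintro rfl
    exact hi ⟨a, rfl⟩

theorem padZero_comp_castLE (h : ℓ ≤ ℓ') {v : Fin ℓ' → ℕ}
    (hv : ∀ i ∉ Set.range (Fin.castLE h), v i = 0) : padZero ℓ' (v ∘ Fin.castLE h) = v := by
  ext i
  by_cases hi : i ∈ Set.range (Fin.castLE h)
  · obtain ⟨i, rfl⟩ := hi
    exact padZero_apply_castLE h _ i
  · rw [padZero_apply_of_notMem_range h _ hi, hv i hi]

theorem prod_padZero (h : ℓ ≤ ℓ') {M : Type*} [CommMonoid M] (F : Fin ℓ' → ℕ → M)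
    (hF : ∀ i, F i 0 = 1) (v : Fin ℓ → ℕ) :
    ∏ i, F i (padZero ℓ' v i) = ∏ i, F (Fin.castLE h i) (v i) :=
  (Fintype.prod_of_injective _ (Fin.castLE_injective h) _ _
    (fun _ hi => by rw [padZero_apply_of_notMem_range h v hi, hF])
    (fun i => by rw [padZero_apply_castLE])).symm

theorem sum_padZero (h : ℓ ≤ ℓ') (v : Fin ℓ → ℕ) : ∑ i, padZero ℓ' v i = ∑ i, v i :=
  (Fintype.sum_of_injective _ (Fin.castLE_injective h) _ _
    (fun _ hi => padZero_apply_of_notMem_range h v hi)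
    (fun _ => (padZero_apply_castLE h v _).symm)).symm

variable (h : ℓ ≤ ℓ') (n : ℕ)

abbrev rowEmb : Fin ℓ × Fin n → Fin ℓ' × Fin n := Prod.map (Fin.castLE h) id

theorem rowEmb_injective : Injective (rowEmb h n) :=
  (Fin.castLE_injective h).prodMap injective_id

theorem rename_mem_homogComp_iff {f : PolyR ℓ n} {d : Fin ℓ → ℕ} :
    rename (rowEmb h n) f ∈ homogComp ℓ' n (padZero ℓ' d) ↔ f ∈ homogComp ℓ n d := by
  have hw : (fun p : Fin ℓ' × Fin n => (Pi.single p.1 1 : Fin ℓ' → ℕ)) ∘ rowEmb h n =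
      padZero ℓ' ∘ fun p : Fin ℓ × Fin n => (Pi.single p.1 1 : Fin ℓ → ℕ) :=
    funext fun p => (padZero_single h p.1 1).symm
  simp only [homogComp, mem_weightedHomogeneousSubmodule,
    isWeightedHomogeneous_rename_iff (rowEmb_injective h n), hw,
    isWeightedHomogeneous_comp_iff (padZero_injective h)]

theorem vars_subset_range_rowEmb {f : PolyR ℓ' n} {d : Fin ℓ → ℕ}
    (hf : f ∈ homogComp ℓ' n (padZero ℓ' d)) : ↑f.vars ⊆ Set.range (rowEmb h n) := by
  intro q hq
  obtain ⟨u, hu, hq⟩ := (mem_vars_iff_mem_support q).1 hq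
  have hle := Finsupp.le_weight_of_ne_zero
    (w := fun p : Fin ℓ' × Fin n => (Pi.single p.1 1 : Fin ℓ' → ℕ)) (fun _ => zero_le)
    (Finsupp.mem_support_iff.1 hq)
  rw [(mem_weightedHomogeneousSubmodule _ _ _ _).1 hf (mem_support_iff.1 hu)] at hle
  have hpos : padZero ℓ' d q.1 ≠ 0 := Nat.one_le_iff_ne_zero.1 (by simpa using hle q.1)
  obtain ⟨i, hi⟩ : q.1 ∈ Set.range (Fin.castLE h) :=
    not_not.1 fun hq1 => hpos (padZero_apply_of_notMem_range h d hq1)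
  exact ⟨(i, q.2), Prod.ext hi rfl⟩

theorem map_rename_homogComp (d : Fin ℓ → ℕ) :
    (homogComp ℓ n d).map (rename (rowEmb h n)).toLinearMap = homogComp ℓ' n (padZero ℓ' d) := by
  ext f
  constructor
  · rintro ⟨g, hg, rfl⟩
    exact (rename_mem_homogComp_iff h n).2 hg
  · intro hf
    obtain ⟨g, rfl⟩ := exists_rename_eq_of_vars_subset_range f _ (rowEmb_injective h n)
      (vars_subset_range_rowEmb h n hf)
    exact ⟨g, (rename_mem_homogComp_iff h n).1 hf, rfl⟩

/-- `Mlist` with the matrix given by its column function, so that `Mlist n (A.map f)` can be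
rewritten without transporting along `List.length_map`. -/
def Mcols (n : ℕ) {ℓ k : ℕ} (a : Fin k → Fin ℓ → ℕ) : PolyR ℓ n :=
  ∑ s ∈ Finset.univ.filter (fun s : Fin k → Fin n => StrictMono s),
    ∏ c, ∏ i, X (i, s c) ^ a c i

theorem Mlist_eq_Mcols (A : List (Fin ℓ → ℕ)) : Mlist n A = Mcols n A.get := rfl

theorem Mcols_comp_cast {k k' : ℕ} (a : Fin k → Fin ℓ → ℕ) (hk : k' = k) :
    Mcols n (a ∘ Fin.cast hk) = Mcols n a := by
  subst hk
  rfl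

theorem Mlist_map (f : (Fin ℓ → ℕ) → Fin ℓ' → ℕ) (A : List (Fin ℓ → ℕ)) :
    Mlist n (A.map f) = Mcols n (f ∘ A.get) := by
  rw [Mlist_eq_Mcols, ← Mcols_comp_cast n (f ∘ A.get) (List.length_map f)]
  congr
  ext c
  simp

theorem rename_Mcols {k : ℕ} (a : Fin k → Fin ℓ → ℕ) :
    rename (rowEmb h n) (Mcols n a) = Mcols n (padZero ℓ' ∘ a) := by
  simp only [Mcols, map_sum, map_prod, map_pow, rename_X]
  refine Finset.sum_congr rfl fun s _ => Finset.prod_congr rfl fun c _ => ?_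
  exact (prod_padZero h (fun i k => X (i, s c) ^ k) (fun _ => pow_zero _) (a c)).symm

theorem rename_Mlist (A : List (Fin ℓ → ℕ)) :
    rename (rowEmb h n) (Mlist n A) = Mlist n (A.map (padZero ℓ')) := by
  rw [Mlist_map, Mlist_eq_Mcols, rename_Mcols]

theorem killCompl_Mcols_eq_zero {k : ℕ} {a : Fin k → Fin ℓ' → ℕ} {c : Fin k} {i : Fin ℓ'}
    (hi : i ∉ Set.range (Fin.castLE h)) (hci : a c i ≠ 0) :
    killCompl (rowEmb_injective h n) (Mcols n a) = 0 := by
  have hX : ∀ j, killCompl (rowEmb_injective h n) (X (i, j) : PolyR ℓ' n) = 0 := fun j =>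
    killCompl_X_of_notMem_range _ fun ⟨p, hp⟩ => hi ⟨p.1, congrArg Prod.fst hp⟩
  simp only [Mcols, map_sum, map_prod, map_pow]
  refine Finset.sum_eq_zero fun s _ => Finset.prod_eq_zero (Finset.mem_univ c) ?_
  exact Finset.prod_eq_zero (Finset.mem_univ i) (by rw [hX, zero_pow hci])

theorem IsRCompList.map {r : ℕ} {A : List (Fin ℓ → ℕ)} (hA : IsRCompList r A)
    (f : (Fin ℓ → ℕ) → Fin ℓ' → ℕ) (hf : ∀ V ∈ A, ∑ i, f V i = ∑ i, V i) :
    IsRCompList r (A.map f) := by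
  refine ⟨by simpa using hA.1, ?_⟩
  simp only [List.mem_map, forall_exists_index, and_imp, forall_apply_eq_imp_iff₂]
  intro V hV
  rw [hf V hV]
  exact hA.2 V hV

theorem Jdeal_le_comap_rename (r : ℕ) :
    Jdeal r n ℓ ≤ (Jdeal r n ℓ').comap (rename (rowEmb h n)) := by
  rw [Jdeal, Ideal.span_le]
  rintro _ ⟨A, hA, hAn, rfl⟩
  rw [SetLike.mem_coe, Ideal.mem_comap, rename_Mlist]
  exact Ideal.subset_span ⟨_, hA.map _ fun V _ => sum_padZero h V, by simpa using hAn, rfl⟩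

theorem Jdeal_le_comap_killCompl (r : ℕ) :
    Jdeal r n ℓ' ≤ (Jdeal r n ℓ).comap (killCompl (rowEmb_injective h n)) := by
  rw [Jdeal, Ideal.span_le]
  rintro _ ⟨A, hA, hAn, rfl⟩
  rw [SetLike.mem_coe, Ideal.mem_comap]
  by_cases hpad : ∀ V ∈ A, ∀ i ∉ Set.range (Fin.castLE h), V i = 0
  · have hA' : (A.map (· ∘ Fin.castLE h)).map (padZero ℓ') = A := by
      rw [List.map_map]
      exact List.map_congr_left (fun V hV => padZero_comp_castLE h (hpad V hV)) |>.trans A.map_id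
    rw [← hA', ← rename_Mlist h, killCompl_rename_app]
    refine Ideal.subset_span ⟨_, hA.map _ fun V hV => ?_, by simpa using hAn, rfl⟩
    rw [← sum_padZero h, padZero_comp_castLE h (hpad V hV)]
  · push Not at hpad
    obtain ⟨V, hV, i, hi, hVi⟩ := hpad
    obtain ⟨c, rfl⟩ := List.mem_iff_get.1 hV
    rw [Mlist_eq_Mcols, killCompl_Mcols_eq_zero h n hi hVi]
    exact zero_mem _

theorem comap_rename_Jdeal (r : ℕ) :
    (Jdeal r n ℓ').comap (rename (rowEmb h n)) = Jdeal r n ℓ := by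
  refine le_antisymm (fun f hf => ?_) (Jdeal_le_comap_rename h n r)
  rw [← killCompl_rename_app (rowEmb_injective h n) f]
  exact Jdeal_le_comap_killCompl h n r hf

end Rows

theorem statement3_general (r n ℓ ℓ' : ℕ) (hℓℓ' : ℓ ≤ ℓ')
    (d : Fin ℓ → ℕ) :
    compDim r n ℓ d =
      compDim r n ℓ' (fun i => if h : (i : ℕ) < ℓ then d ⟨i, h⟩ else 0) := by
  change _ = compDim r n ℓ' (padZero ℓ' d)
  rw [compDim, compDim, ← map_rename_homogComp hℓℓ' n,
    finrank_map_mkₐ_map_of_comap_eq _ (comap_rename_Jdeal hℓℓ' n r)]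

/-- Stability of the multigraded Hilbert function under increasing the number
of sets of variables from `ℓ` to `ℓ'`: the dimension of the multidegree-`d` component of `R/J`
equals the dimension of the multidegree-`(d,0,…,0)` component of `R'/J'`. -/
theorem statement3 (r n ℓ ℓ' : ℕ) (hr : 1 ≤ r) (hn : 1 ≤ n) (hℓ : 1 ≤ ℓ) (hℓℓ' : ℓ ≤ ℓ')
    (d : Fin ℓ → ℕ) :
    compDim r n ℓ d =
      compDim r n ℓ' (fun i => if h : (i : ℕ) < ℓ then d ⟨i, h⟩ else 0) :=
  statement3_general r n ℓ ℓ' hℓℓ' d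

end
end

section
/- Let B be an ℓ×n matrix of nonnegative integers whose total entry sum is strictly greater than 2rn − r − n. Then there exists an ℓ×n matrix A of nonnegative integers with A ≤ B entrywise, every column sum of A divisible by r, and total entry sum of A equal to rn. Equivalently, every monomial of total degree strictly greater than 2rn − r − n in the variables x_{ij} (1 ≤ i ≤ ℓ, 1 ≤ j ≤ n) is divisible by a monomial X^A = ∏_{i,j} x_{ij}^{A_{ij}} whose exponent matrix A has all column sums divisible by r and r-size w_r(A) = (sum of entries)/r exactly n. -/
/-!
Let `c j` be the column sums of `B`. Since `c j ≤ r ⌊c j / r⌋ + (r - 1)`, a total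
`∑ c j > r (n - 1) + n (r - 1) = 2rn - r - n` forces `∑ ⌊c j / r⌋ ≥ n`. Choose `f j ≤ ⌊c j / r⌋`
with `∑ f j = n`, and then in column `j` entries below those of `B` summing to `r f j`.
-/

open Finset

theorem Finset.exists_le_sum_eq_of_le_sum {ι : Type*} (s : Finset ι) (d : ι → ℕ) {k : ℕ}
    (hk : k ≤ ∑ i ∈ s, d i) : ∃ m : ι → ℕ, m ≤ d ∧ ∑ i ∈ s, m i = k := by
  classical
  induction s using Finset.induction_on generalizing k with
  | empty => exact ⟨0, fun i => Nat.zero_le _, by rw [sum_empty] at hk ⊢; omega⟩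
  | insert a s ha ih =>
    rw [sum_insert ha] at hk
    obtain ⟨m, hmd, hm⟩ := ih (k := k - d a) (by omega)
    refine ⟨Function.update m a (min k (d a)), fun i => ?_, ?_⟩
    · rcases eq_or_ne i a with rfl | hia
      · simp
      · simpa [Function.update_of_ne hia] using hmd i
    · rw [sum_insert ha, Function.update_self, sum_update_of_notMem ha, hm]
      omega

theorem Finset.sum_le_mul_sum_div_add {ι : Type*} (s : Finset ι) (c : ι → ℕ) {r : ℕ}
    (hr : 0 < r) : ∑ i ∈ s, c i ≤ r * ∑ i ∈ s, c i / r + #s * (r - 1) := by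
  have hc : ∀ i, c i ≤ r * (c i / r) + (r - 1) := fun i => by
    have := Nat.mod_lt (c i) hr
    have := Nat.div_add_mod (c i) r
    omega
  calc ∑ i ∈ s, c i ≤ ∑ i ∈ s, (r * (c i / r) + (r - 1)) := sum_le_sum fun i _ => hc i
    _ = r * ∑ i ∈ s, c i / r + #s * (r - 1) := by
      rw [sum_add_distrib, mul_sum, sum_const, smul_eq_mul]

theorem Fintype.card_le_sum_div_of_lt_sum {ι : Type*} [Fintype ι] (c : ι → ℕ) {r : ℕ}
    (hr : 0 < r) (h : 2 * r * Fintype.card ι - r - Fintype.card ι < ∑ i, c i) :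
    Fintype.card ι ≤ ∑ i, c i / r := by
  by_contra! hlt
  have hsum := sum_le_mul_sum_div_add univ c hr
  rw [card_univ] at hsum
  obtain ⟨m, hm⟩ : ∃ m, Fintype.card ι = m + 1 := Nat.exists_eq_add_one.mpr (by omega)
  obtain ⟨q, rfl⟩ : ∃ q, r = q + 1 := Nat.exists_eq_add_one.mpr hr
  rw [hm, Nat.add_sub_cancel] at hsum
  rw [hm] at h hlt
  have hdiv : (q + 1) * ∑ i, c i / (q + 1) ≤ (q + 1) * m :=
    Nat.mul_le_mul_left _ (Nat.lt_succ_iff.mp hlt)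
  have hexpand : 2 * (q + 1) * (m + 1) - (q + 1) - (m + 1) = (q + 1) * m + (m + 1) * q := by
    ring_nf; omega
  omega

theorem exists_le_forall_sum_eq {ι κ : Type*} [Fintype ι] (B : ι → κ → ℕ) (t : κ → ℕ)
    (ht : ∀ j, t j ≤ ∑ i, B i j) : ∃ A ≤ B, ∀ j, ∑ i, A i j = t j := by
  choose a haB ha using fun j => exists_le_sum_eq_of_le_sum univ (fun i => B i j) (ht j)
  exact ⟨fun i j => a j i, fun i j => haB j i, ha⟩

theorem statement8_general (r n ℓ : ℕ) (hr : 1 ≤ r)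
    (B : Fin ℓ → Fin n → ℕ) (hB : 2 * r * n - r - n < ∑ i, ∑ j, B i j) :
    ∃ A : Fin ℓ → Fin n → ℕ,
      (∀ i j, A i j ≤ B i j) ∧
      (∀ j, r ∣ ∑ i, A i j) ∧
      (∑ i, ∑ j, A i j) = r * n := by
  have hquot : n ≤ ∑ j, (∑ i, B i j) / r := by
    simpa using Fintype.card_le_sum_div_of_lt_sum (fun j => ∑ i, B i j) hr
      (by simpa [sum_comm (f := B)] using hB)
  obtain ⟨f, hf, hfn⟩ := exists_le_sum_eq_of_le_sum univ _ hquot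
  obtain ⟨A, hAB, hA⟩ := exists_le_forall_sum_eq B (fun j => r * f j) fun j =>
    (Nat.mul_le_mul_left r (hf j)).trans (Nat.mul_div_le _ _)
  refine ⟨A, hAB, fun j => ⟨f j, hA j⟩, ?_⟩
  rw [sum_comm, sum_congr rfl fun j _ => hA j, ← mul_sum, hfn]

/-- Every `ℓ×n` matrix `B` of nonnegative integers with total entry sum
strictly greater than `2rn - r - n` dominates (entrywise) an `ℓ×n` matrix `A` all of whose
column sums are divisible by `r` and whose total entry sum is exactly `rn` (i.e. `A` has
`r`-size exactly `n`).  Equivalently, every monomial of total degree `> 2rn - r - n` is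
divisible by a monomial `X^A` with `A` an `r`-matrix of `r`-size `n`. -/
theorem statement8 (r n ℓ : ℕ) (hr : 1 ≤ r) (hn : 1 ≤ n) (hℓ : 1 ≤ ℓ)
    (B : Fin ℓ → Fin n → ℕ) (hB : 2 * r * n - r - n < ∑ i, ∑ j, B i j) :
    ∃ A : Fin ℓ → Fin n → ℕ,
      (∀ i j, A i j ≤ B i j) ∧
      (∀ j, r ∣ ∑ i, A i j) ∧
      (∑ i, ∑ j, A i j) = r * n :=
  statement8_general r n ℓ hr B hB
end

section
/- For every ℓ×ℓ matrix τ = (τ_{ii'}) with rational entries and every r-composition-matrix A, the polynomial obtained from M_A by the linear substitution x_{ij} ↦ Σ_{i'=1}^ℓ τ_{ii'} x_{i'j} (for all i, j) lies in the ℚ-linear span of the monomial quasi-invariants {M_B : B an r-composition-matrix with ℓ rows and at most n columns}. Consequently, the ideal J generated by the M_A is stable under the action f(X) ↦ f(τX) of GL_ℓ(ℚ) on R. -/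
open scoped Classical

noncomputable section

/-- The algebra endomorphism of `R` induced by the linear substitution
`x_{ij} ↦ Σ_{i'} τ_{i i'} x_{i' j}` attached to an `ℓ×ℓ` matrix `τ`. -/
noncomputable def subst (n : ℕ) {ℓ : ℕ} (τ : Matrix (Fin ℓ) (Fin ℓ) ℚ) :
    PolyR ℓ n →ₐ[ℚ] PolyR ℓ n :=
  MvPolynomial.aeval
    (fun p : Fin ℓ × Fin n =>
      ∑ i' : Fin ℓ, MvPolynomial.C (τ p.1 i') * MvPolynomial.X (i', p.2))

/-!
The substitution `x_{ij} ↦ Σ_{i'} τ_{i i'} x_{i' j}` acts on each column of variables separately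
and linearly, so it sends the column monomial `X_j^V` to a homogeneous polynomial of degree
`Σ_i V_i` in the variables of column `j` alone. Expanding the product over the columns of each
term of `M_A` therefore writes the image of `M_A` as a rational combination of the `M_B` for the
matrices `B` whose column sums are those of `A`; these are again `r`-composition-matrices. A ring
endomorphism sending the generators of `J` into `J` preserves `J`.
-/

open MvPolynomial

section LinearSubst

variable {R σ : Type*} [CommSemiring R] [Fintype σ]

def linearSubstMonomial (τ : Matrix σ σ R) (V : σ → ℕ) : MvPolynomial σ R :=
  ∏ i, (∑ i', C (τ i i') * X i') ^ V i

theorem isHomogeneous_linearSubstMonomial (τ : Matrix σ σ R) (V : σ → ℕ) :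
    (linearSubstMonomial τ V).IsHomogeneous (∑ i, V i) := by
  refine IsHomogeneous.prod _ _ _ fun i _ => ?_
  have hlin : (∑ i', C (τ i i') * X i' : MvPolynomial σ R).IsHomogeneous 1 :=
    IsHomogeneous.sum _ _ _ fun i' _ => isHomogeneous_C_mul_X _ _
  simpa only [one_mul] using hlin.pow (V i)

theorem sum_eq_of_mem_support_linearSubstMonomial (τ : Matrix σ σ R) (V : σ → ℕ)
    {W : σ →₀ ℕ} (hW : W ∈ (linearSubstMonomial τ V).support) : ∑ i, W i = ∑ i, V i := by
  rw [← Finsupp.degree_eq_sum, Finsupp.degree_eq_weight_one]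
  exact isHomogeneous_linearSubstMonomial τ V (mem_support_iff.mp hW)

end LinearSubst

theorem subst_prod_X_pow {n ℓ : ℕ} (τ : Matrix (Fin ℓ) (Fin ℓ) ℚ) (V : Fin ℓ → ℕ) (j : Fin n) :
    subst n τ (∏ i, X (i, j) ^ V i) =
      ∑ W ∈ (linearSubstMonomial τ V).support,
        coeff W (linearSubstMonomial τ V) • ∏ i, X (i, j) ^ W i := by
  have hcol : subst n τ (∏ i, X (i, j) ^ V i) = rename (·, j) (linearSubstMonomial τ V) := by
    simp [subst, linearSubstMonomial, rename_eq_aeval]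
  rw [hcol]
  conv_lhs => rw [← (linearSubstMonomial τ V).support_sum_monomial_coeff]
  rw [map_sum]
  refine Finset.sum_congr rfl fun W _ => ?_
  rw [rename_eq_aeval, aeval_monomial, Finsupp.prod_fintype _ _ fun _ => pow_zero _,
    Algebra.smul_def]
  rfl

def Mfin (n : ℕ) {ℓ k : ℕ} (B : Fin k → Fin ℓ → ℕ) : PolyR ℓ n :=
  ∑ s ∈ Finset.univ.filter (fun s : Fin k → Fin n => StrictMono s),
    ∏ c, ∏ i, X (i, s c) ^ B c i

theorem Mfin_eq_Mlist_ofFn (n : ℕ) {ℓ k : ℕ} (B : Fin k → Fin ℓ → ℕ) :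
    Mfin n B = Mlist n (List.ofFn B) := by
  have hcast : ∀ {k'} (h : k' = k), Mfin n (fun c => B (Fin.cast h c)) = Mfin n B := by
    rintro _ rfl; rfl
  rw [← hcast List.length_ofFn]
  exact congrArg (Mfin n) (funext fun c => (List.get_ofFn B c).symm)

theorem subst_Mfin {n ℓ k : ℕ} (τ : Matrix (Fin ℓ) (Fin ℓ) ℚ) (B : Fin k → Fin ℓ → ℕ) :
    subst n τ (Mfin n B) =
      ∑ p ∈ Fintype.piFinset (fun c => (linearSubstMonomial τ (B c)).support),
        (∏ c, coeff (p c) (linearSubstMonomial τ (B c))) • Mfin n (fun c i => p c i) := by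
  have hterm : ∀ s : Fin k → Fin n,
      subst n τ (∏ c, ∏ i, X (i, s c) ^ B c i) =
        ∑ p ∈ Fintype.piFinset (fun c => (linearSubstMonomial τ (B c)).support),
          (∏ c, coeff (p c) (linearSubstMonomial τ (B c))) • ∏ c, ∏ i, X (i, s c) ^ p c i := by
    intro s
    rw [map_prod, Finset.prod_congr rfl fun c _ => subst_prod_X_pow τ (B c) (s c),
      Finset.prod_univ_sum]
    simp only [smul_eq_C_mul, Finset.prod_mul_distrib, map_prod]
  rw [Mfin, map_sum, Finset.sum_congr rfl fun s _ => hterm s, Finset.sum_comm]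
  simp only [Mfin, Finset.smul_sum]

theorem isRCompList_ofFn {r ℓ : ℕ} {A : List (Fin ℓ → ℕ)} (hA : IsRCompList r A)
    (p : Fin A.length → Fin ℓ → ℕ) (hp : ∀ c, ∑ i, p c i = ∑ i, A.get c i) :
    IsRCompList r (List.ofFn p) := by
  refine ⟨by simpa [List.ofFn_eq_nil_iff, List.length_eq_zero_iff] using hA.1, ?_⟩
  rintro V hV
  obtain ⟨c, rfl⟩ := List.mem_ofFn.mp hV
  rw [hp c]
  exact hA.2 _ (A.get_mem c)

def quasiInvariants (r n ℓ : ℕ) : Set (PolyR ℓ n) :=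
  {f | ∃ B : List (Fin ℓ → ℕ), IsRCompList r B ∧ B.length ≤ n ∧ f = Mlist n B}

theorem subst_Mlist_mem_span {r n ℓ : ℕ} (τ : Matrix (Fin ℓ) (Fin ℓ) ℚ)
    {A : List (Fin ℓ → ℕ)} (hA : IsRCompList r A) (hlen : A.length ≤ n) :
    subst n τ (Mlist n A) ∈ Submodule.span ℚ (quasiInvariants r n ℓ) := by
  rw [show Mlist n A = Mfin n (fun c => A.get c) from rfl, subst_Mfin]
  refine Submodule.sum_mem _ fun p hp => Submodule.smul_mem _ _ (Submodule.subset_span ?_)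
  refine ⟨List.ofFn fun c i => p c i, isRCompList_ofFn hA _ fun c => ?_, ?_,
    Mfin_eq_Mlist_ofFn n _⟩
  · exact sum_eq_of_mem_support_linearSubstMonomial τ _ (Fintype.mem_piFinset.mp hp c)
  · rwa [List.length_ofFn]

theorem Jdeal_le_comap_subst (r n ℓ : ℕ) (τ : Matrix (Fin ℓ) (Fin ℓ) ℚ) :
    Jdeal r n ℓ ≤ (Jdeal r n ℓ).comap (subst n τ) := by
  refine Ideal.span_le.mpr ?_
  rintro _ ⟨A, hA, hlen, rfl⟩
  exact Submodule.span_le_restrictScalars ℚ (PolyR ℓ n) (quasiInvariants r n ℓ)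
    (subst_Mlist_mem_span τ hA hlen)

theorem statement9_general (r n ℓ : ℕ) :
    (∀ τ : Matrix (Fin ℓ) (Fin ℓ) ℚ, ∀ A : List (Fin ℓ → ℕ),
        IsRCompList r A → A.length ≤ n →
        subst n τ (Mlist n A) ∈ Submodule.span ℚ
          {f : PolyR ℓ n | ∃ B : List (Fin ℓ → ℕ),
            IsRCompList r B ∧ B.length ≤ n ∧ f = Mlist n B}) ∧
    (∀ τ : GL (Fin ℓ) ℚ, ∀ f ∈ Jdeal r n ℓ,
        subst n (τ : Matrix (Fin ℓ) (Fin ℓ) ℚ) f ∈ Jdeal r n ℓ) :=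
  ⟨fun τ _ hA hlen => subst_Mlist_mem_span τ hA hlen,
    fun τ _ hf => Jdeal_le_comap_subst r n ℓ τ hf⟩

/-- For every `ℓ×ℓ` rational matrix `τ`, the substitution
`x_{ij} ↦ Σ_{i'} τ_{i i'} x_{i' j}` sends each monomial quasi-invariant `M_A` into the
`ℚ`-linear span of the monomial quasi-invariants; consequently the ideal `J` is stable
under the `GL_ℓ(ℚ)`-action `f(X) ↦ f(τX)`. -/
theorem statement9 (r n ℓ : ℕ) (hr : 1 ≤ r) (hn : 1 ≤ n) (hℓ : 1 ≤ ℓ) :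
    (∀ τ : Matrix (Fin ℓ) (Fin ℓ) ℚ, ∀ A : List (Fin ℓ → ℕ),
        IsRCompList r A → A.length ≤ n →
        subst n τ (Mlist n A) ∈ Submodule.span ℚ
          {f : PolyR ℓ n | ∃ B : List (Fin ℓ → ℕ),
            IsRCompList r B ∧ B.length ≤ n ∧ f = Mlist n B}) ∧
    (∀ τ : GL (Fin ℓ) ℚ, ∀ f ∈ Jdeal r n ℓ,
        subst n (τ : Matrix (Fin ℓ) (Fin ℓ) ℚ) f ∈ Jdeal r n ℓ) :=
  statement9_general r n ℓ

end
end

section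
/- For every d ∈ ℕ^ℓ, the number of ℓ×n matrices A of nonnegative integers with row-sum vector d (Σ_j A_{ij} = d_i for all i) such that π(A) is an ℓ-Dyck path equals the number of pairs (β, C), where β is a Dyck path of height n and C = (c_{kj}) is an (n−1)×ℓ matrix of nonnegative integers satisfying Σ_{j=1}^ℓ c_{kj} = a_k(β) for every 1 ≤ k ≤ n−1 and Σ_{k=1}^{n−1} c_{kj} = d_j for every 1 ≤ j ≤ ℓ. -/
open scoped Classical

noncomputable section

/-- `π(A)` is an `ℓ`-Dyck path: with `w₁,…,w_{ℓn}` the entries-reading word of `A` (column by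
column, top to bottom), `ℓ·(w₁ + … + w_t) ≤ t - 1` for all `1 ≤ t ≤ ℓn`; here the entry of
`A` at 0-based reading position `j·ℓ + i` is `A i j`. -/
def IsLDyck (ℓ n : ℕ) (A : Fin ℓ → Fin n → ℕ) : Prop :=
  ∀ s : ℕ, s < ℓ * n →
    ℓ * (∑ p ∈ Finset.univ.filter
          (fun p : Fin ℓ × Fin n => (p.2 : ℕ) * ℓ + (p.1 : ℕ) ≤ s), A p.1 p.2) ≤ s

/-- A Dyck path of height `n`, encoded by its numbers of east steps at each level: a function
`a : Fin (n+1) → ℕ` with `Σ a = n` (the path ends at `(n,n)`) and, for each level `k < n`,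
`a 0 + … + a k ≤ k` (every point `(x,y)` of the path satisfies `x ≤ y`).  Here `a k` is the
number of east steps at level `k`, i.e. `a_k(β)`. -/
def DyckEnc (n : ℕ) : Type :=
  {a : Fin (n + 1) → ℕ // (∑ k, a k) = n ∧
    ∀ k : Fin (n + 1), (k : ℕ) < n →
      (∑ j ∈ Finset.univ.filter (fun j : Fin (n + 1) => j ≤ k), a j) ≤ (k : ℕ)}

/-!
Reading the word of `A` column by column, the `ℓ`-Dyck condition is binding only at the ends of
columns, where it says that the column sums `b₀, …, b_{n-1}` of `A` satisfy `b₀ + ⋯ + b_j ≤ j`.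
These are exactly the east-step counts of a Dyck path `β` of height `n` at the levels below `n`,
the count at level `n` being forced. In particular `b₀ = 0`, so the first column of `A` vanishes,
and the remaining `n - 1` columns, transposed, form a matrix `C` with row sums `a_k(β)` and column
sums `d`; conversely `(β, C)` determines `A`.
-/

open Finset

namespace DyckMatrix

variable {ℓ n m : ℕ}

def colSum (A : Fin ℓ → Fin n → ℕ) (j : Fin n) : ℕ := ∑ i, A i j

/-- `b j` is the number of east steps at level `j` of a Dyck path of height `n`, for `j < n`. -/
def IsBallot (b : Fin n → ℕ) : Prop := ∀ j : Fin n, ∑ c ≤ j, b c ≤ j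

lemma IsBallot.apply_zero {b : Fin (m + 1) → ℕ} (hb : IsBallot b) : b 0 = 0 := by
  simpa using hb 0

lemma IsBallot.sum_le {b : Fin n → ℕ} (hb : IsBallot b) : ∑ c, b c ≤ n := by
  cases n with
  | zero => simp
  | succ m =>
    have h := hb (Fin.last m)
    rw [← Fin.top_eq_last, Iic_top] at h
    omega

lemma mul_succ_add_le_mul_succ_add_iff {x j a k : ℕ} (ha : a ≤ k) :
    x * (k + 1) + a ≤ j * (k + 1) + k ↔ x ≤ j := by
  constructor <;> intro h
  · by_contra! hlt
    nlinarith
  · nlinarith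

lemma sum_filter_snd_le (A : Fin ℓ → Fin n → ℕ) (j : Fin n) :
    ∑ p : Fin ℓ × Fin n with p.2 ≤ j, A p.1 p.2 = ∑ c ≤ j, colSum A c := by
  rw [sum_filter, Fintype.sum_prod_type, sum_comm, ← filter_ge_eq_Iic, sum_filter]
  simp only [colSum, sum_ite_irrel, sum_const_zero]

theorem isLDyck_iff_isBallot_colSum (A : Fin ℓ → Fin n → ℕ) :
    IsLDyck ℓ n A ↔ IsBallot (colSum A) := by
  obtain _ | k := ℓ
  · simp [IsLDyck, IsBallot, colSum]
  constructor
  · intro h j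
    have hcol (p : Fin (k + 1) × Fin n) : p.2 * (k + 1) + p.1 ≤ j * (k + 1) + k ↔ p.2 ≤ j :=
      mul_succ_add_le_mul_succ_add_iff (Nat.lt_succ_iff.1 p.1.isLt)
    have key := h (j * (k + 1) + k) (by nlinarith [j.isLt])
    simp only [hcol, sum_filter_snd_le] at key
    by_contra! hlt
    nlinarith
  · intro h s hs
    have hq : s / (k + 1) < n := Nat.div_lt_of_lt_mul hs
    calc (k + 1) * ∑ p : Fin (k + 1) × Fin n with p.2 * (k + 1) + p.1 ≤ s, A p.1 p.2
        ≤ (k + 1) * ∑ p : Fin (k + 1) × Fin n with p.2 ≤ ⟨s / (k + 1), hq⟩, A p.1 p.2 := by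
          gcongr with p hp
          rw [Fin.le_iff_val_le_val, Nat.le_div_iff_mul_le (by omega)]
          omega
      _ = (k + 1) * ∑ c ≤ ⟨s / (k + 1), hq⟩, colSum A c := by rw [sum_filter_snd_le]
      _ ≤ (k + 1) * (s / (k + 1)) := by gcongr; exact h _
      _ ≤ s := Nat.mul_div_le s (k + 1)

def dyckEncEquivBallot : DyckEnc n ≃ {b : Fin n → ℕ // IsBallot b} where
  toFun a := ⟨Fin.init a.1, fun j => by
    simpa [Fin.init, ← Fin.sum_Iic_castSucc, filter_ge_eq_Iic] using a.2.2 j.castSucc j.isLt⟩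
  invFun b := ⟨Fin.snoc b.1 (n - ∑ c, b.1 c), by
    refine ⟨?_, fun k hk => ?_⟩
    · have := b.2.sum_le
      simp only [Fin.sum_univ_castSucc, Fin.snoc_castSucc, Fin.snoc_last]
      omega
    · obtain ⟨j, rfl⟩ : ∃ j : Fin n, j.castSucc = k := ⟨⟨k, hk⟩, rfl⟩
      simpa [filter_ge_eq_Iic, Fin.sum_Iic_castSucc] using b.2 j⟩
  left_inv a := by
    have hlast : a.1 (Fin.last n) = n - ∑ c, Fin.init a.1 c := by
      have := a.2.1
      rw [Fin.sum_univ_castSucc] at this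
      exact Nat.eq_sub_of_add_eq' this
    refine Subtype.ext ?_
    change Fin.snoc (Fin.init a.1) _ = a.1
    rw [← hlast, Fin.snoc_init_self]
  right_inv b := Subtype.ext (Fin.init_snoc (α := fun _ => ℕ) _ _)

lemma dyckEncEquivBallot_symm_apply_castSucc (b : {b : Fin n → ℕ // IsBallot b}) (j : Fin n) :
    (dyckEncEquivBallot.symm b).1 j.castSucc = b.1 j :=
  Fin.snoc_castSucc (α := fun _ => ℕ) _ _ _

def consZeroCol (C : Fin m → Fin ℓ → ℕ) : Fin ℓ → Fin (m + 1) → ℕ :=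
  fun i => Fin.cons 0 fun k => C k i

lemma sum_consZeroCol (C : Fin m → Fin ℓ → ℕ) (i : Fin ℓ) :
    ∑ j, consZeroCol C i j = ∑ k, C k i := by
  simp [consZeroCol, Fin.sum_cons]

lemma colSum_consZeroCol (C : Fin m → Fin ℓ → ℕ) :
    colSum (consZeroCol C) = Fin.cons 0 fun k => ∑ i, C k i := by
  ext j
  cases j using Fin.cases <;> simp [colSum, consZeroCol]

lemma consZeroCol_succ {A : Fin ℓ → Fin (m + 1) → ℕ} (hA : colSum A 0 = 0) :
    consZeroCol (fun k i => A i k.succ) = A := by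
  ext i j
  cases j using Fin.cases with
  | zero => exact ((sum_eq_zero_iff.1 hA) i (mem_univ i)).symm
  | succ k => rfl

lemma init_eq_cons (a : DyckEnc (m + 1)) :
    Fin.init a.1 = Fin.cons 0 fun k => a.1 k.succ.castSucc := by
  ext j
  cases j using Fin.cases with
  | zero => exact (dyckEncEquivBallot a).2.apply_zero
  | succ k => rfl

def ldyckMatrixEquiv (d : Fin ℓ → ℕ) :
    {A : Fin ℓ → Fin (m + 1) → ℕ // (∀ i, ∑ j, A i j = d i) ∧ IsLDyck ℓ (m + 1) A} ≃
      {p : DyckEnc (m + 1) × (Fin m → Fin ℓ → ℕ) //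
        (∀ k, ∑ j, p.2 k j = p.1.1 k.succ.castSucc) ∧ ∀ j, ∑ k, p.2 k j = d j} where
  toFun A :=
    have hA := (isLDyck_iff_isBallot_colSum A.1).1 A.2.2
    ⟨(dyckEncEquivBallot.symm ⟨colSum A.1, hA⟩, fun k i => A.1 i k.succ),
      fun k => (dyckEncEquivBallot_symm_apply_castSucc ⟨colSum A.1, hA⟩ k.succ).symm,
      fun j => by
        show ∑ k : Fin m, A.1 j k.succ = d j
        rw [← A.2.1 j, Fin.sum_univ_succ, sum_eq_zero_iff.1 hA.apply_zero j (mem_univ j),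
          zero_add]⟩
  invFun p := ⟨consZeroCol p.1.2, fun i => by rw [sum_consZeroCol, p.2.2], by
    rw [isLDyck_iff_isBallot_colSum, colSum_consZeroCol]
    simp only [p.2.1, ← init_eq_cons]
    exact (dyckEncEquivBallot p.1.1).2⟩
  left_inv A := Subtype.ext (consZeroCol_succ
    ((isLDyck_iff_isBallot_colSum A.1).1 A.2.2).apply_zero)
  right_inv p := by
    refine Subtype.ext (Prod.ext ?_ rfl)
    rw [Equiv.symm_apply_eq]
    exact Subtype.ext (by simp only [colSum_consZeroCol, p.2.1, ← init_eq_cons]; rfl)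

end DyckMatrix

/-- The number of `ℓ×n` matrices `A` of nonnegative integers with row-sum
vector `d` such that `π(A)` is an `ℓ`-Dyck path equals the number of pairs `(β, C)` with `β`
a Dyck path of height `n` and `C` an `(n-1)×ℓ` matrix of nonnegative integers whose `k`-th
row sums to `a_k(β)` (`1 ≤ k ≤ n-1`) and whose `j`-th column sums to `d j`. -/
theorem statement13 (n ℓ : ℕ) (hn : 1 ≤ n) (d : Fin ℓ → ℕ) :
    Nat.card {A : Fin ℓ → Fin n → ℕ //
        (∀ i : Fin ℓ, (∑ j, A i j) = d i) ∧ IsLDyck ℓ n A} =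
      Nat.card {p : DyckEnc n × (Fin (n - 1) → Fin ℓ → ℕ) //
        (∀ k : Fin (n - 1),
          (∑ j, p.2 k j) = p.1.val ⟨(k : ℕ) + 1, by have := k.isLt; omega⟩) ∧
        (∀ j : Fin ℓ, (∑ k, p.2 k j) = d j)} := by
  obtain ⟨m, rfl⟩ := Nat.exists_eq_add_of_le' hn
  exact Nat.card_congr (DyckMatrix.ldyckMatrixEquiv d)

end
end
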